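/- Let n ≥ 2 and f ≥ 1 be natural numbers, and let 𝒴 be a countable family of multisets of binary strings, each of cardinality n, such that every string belongs to at most f members of 𝒴. Then there exists a labeling L : 𝒴 → Fin (n·f − (n − 1)) such that whenever Y ≠ Y' are members of 𝒴 sharing a common element, L(Y) ≠ L(Y'). -/

import Mathlib

/-!
Two members of `𝒴` conflict when they share a string. Through each of its at most `n` distinct
strings a member meets at most `f - 1` others, so every vertex of the conflict graph has fewer than
`n (f - 1) + 1 = n f - (n - 1)` neighbours. Colouring the vertices greedily along a well-order,
each vertex finds a colour unused by its earlier neighbours.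
-/

theorem Set.exists_forall_ne_of_encard_lt {α : Type*} {s : Set α} {m : ℕ}
    (hs : s.encard < m) (g : ∀ a ∈ s, Fin m) : ∃ c, ∀ a (ha : a ∈ s), g a ha ≠ c := by
  have hlt : (Set.range fun a : s ↦ g a a.2).encard < (Set.univ : Set (Fin m)).encard := calc
    _ ≤ (Set.univ : Set s).encard := by rw [← Set.image_univ]; exact Set.encard_image_le _ _
    _ = s.encard := by simp
    _ < _ := by simpa using hs
  obtain ⟨c, hc⟩ := (Set.ne_univ_iff_exists_notMem _).mp fun h ↦ hlt.ne (congrArg Set.encard h)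
  exact ⟨c, fun a ha hac ↦ hc ⟨⟨a, ha⟩, hac⟩⟩

namespace SimpleGraph

variable {V : Type*} (G : SimpleGraph V)

theorem colorable_of_encard_neighborSet_lt {m : ℕ} (h : ∀ v, (G.neighborSet v).encard < m) :
    G.Colorable m := by
  let r : V → V → Prop := WellOrderingRel
  have hfree (v : V) (prev : ∀ w, r w v → Fin m) :
      ∃ c, ∀ w (hw : w ∈ G.neighborSet v ∩ {w | r w v}), prev w hw.2 ≠ c :=
    Set.exists_forall_ne_of_encard_lt
      ((Set.encard_le_encard Set.inter_subset_left).trans_lt (h v)) fun w hw ↦ prev w hw.2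
  choose pick hpick using hfree
  let C : V → Fin m := IsWellFounded.wf.fix (r := r) pick
  have hC (v : V) : C v = pick v fun w _ ↦ C w := IsWellFounded.wf.fix_eq (r := r) pick v
  have hne {v w : V} (hvw : G.Adj v w) (hwv : r w v) : C v ≠ C w := by
    rw [hC v]; exact (hpick v _ w ⟨hvw, hwv⟩).symm
  refine ⟨Coloring.mk C fun {v w} hvw ↦ ?_⟩
  rcases trichotomous_of r v w with hlt | rfl | hgt
  · exact (hne hvw.symm hlt).symm
  · exact absurd hvw (G.loopless.irrefl _)
  · exact hne hvw hgt

end SimpleGraph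

def Multiset.sharingGraph {α : Type*} (𝒴 : Set (Multiset α)) : SimpleGraph (Multiset α) where
  Adj Y Z := Y ∈ 𝒴 ∧ Z ∈ 𝒴 ∧ Y ≠ Z ∧ ∃ s, s ∈ Y ∧ s ∈ Z
  symm := ⟨fun _ _ ⟨hY, hZ, hne, s, hsY, hsZ⟩ ↦ ⟨hZ, hY, hne.symm, s, hsZ, hsY⟩⟩
  loopless := ⟨fun _ h ↦ h.2.2.1 rfl⟩

namespace Multiset

variable {α : Type*} {𝒴 : Set (Multiset α)}

@[simp]
theorem sharingGraph_adj {Y Z : Multiset α} :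
    (sharingGraph 𝒴).Adj Y Z ↔ Y ∈ 𝒴 ∧ Z ∈ 𝒴 ∧ Y ≠ Z ∧ ∃ s, s ∈ Y ∧ s ∈ Z :=
  Iff.rfl

theorem neighborSet_sharingGraph_subset [DecidableEq α] (Y : Multiset α) :
    (sharingGraph 𝒴).neighborSet Y ⊆ ⋃ s ∈ Y.toFinset, {Z ∈ 𝒴 | s ∈ Z} \ {Y} :=
  fun _ hZ ↦
    have ⟨_, hZ, hne, _, hsY, hsZ⟩ := sharingGraph_adj.mp hZ
    Set.mem_biUnion (mem_toFinset.mpr hsY) ⟨⟨hZ, hsZ⟩, Ne.symm hne⟩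

theorem neighborSet_sharingGraph_eq_empty {Y : Multiset α} (hY : Y ∉ 𝒴) :
    (sharingGraph 𝒴).neighborSet Y = ∅ :=
  Set.eq_empty_of_forall_notMem fun _ hZ ↦ hY (sharingGraph_adj.mp hZ).1

theorem encard_neighborSet_sharingGraph_le {f : ℕ}
    (hf : ∀ s, {Y ∈ 𝒴 | s ∈ Y}.encard ≤ f) {Y : Multiset α} (hY : Y ∈ 𝒴) :
    ((sharingGraph 𝒴).neighborSet Y).encard ≤ (card Y * (f - 1) : ℕ) := by
  classical
  calc ((sharingGraph 𝒴).neighborSet Y).encard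
      ≤ (⋃ s ∈ Y.toFinset, {Z ∈ 𝒴 | s ∈ Z} \ {Y}).encard :=
        Set.encard_le_encard (neighborSet_sharingGraph_subset Y)
    _ ≤ ∑ s ∈ Y.toFinset, ({Z ∈ 𝒴 | s ∈ Z} \ {Y}).encard := Finset.set_encard_biUnion_le _ _
    _ ≤ ∑ _s ∈ Y.toFinset, ((f - 1 : ℕ) : ℕ∞) := Finset.sum_le_sum fun s hs ↦ by
        have hYs : Y ∈ {Z ∈ 𝒴 | s ∈ Z} := ⟨hY, mem_toFinset.mp hs⟩
        rw [Set.encard_sdiff_singleton_of_mem hYs, ENat.natCast_sub]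
        exact tsub_le_tsub_right (hf s) 1
    _ ≤ (card Y * (f - 1) : ℕ) := by
        rw [Finset.sum_const, nsmul_eq_mul]
        exact_mod_cast Nat.mul_le_mul_right _ (toFinset_card_le Y)

end Multiset

theorem labeling_exists_general (n f : ℕ) (hn : 2 ≤ n) (hf : 1 ≤ f)
    (𝒴 : Set (Multiset (List Bool)))
    (hcard : ∀ Y ∈ 𝒴, Multiset.card Y = n)
    (hmemfin : ∀ y : List Bool, {Y ∈ 𝒴 | y ∈ Y}.Finite)
    (hmem : ∀ y : List Bool, {Y ∈ 𝒴 | y ∈ Y}.ncard ≤ f) :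
    ∃ L : Multiset (List Bool) → Fin (n * f - (n - 1)),
      ∀ Y ∈ 𝒴, ∀ Y' ∈ 𝒴, Y ≠ Y' → (∃ s : List Bool, s ∈ Y ∧ s ∈ Y') →
        L Y ≠ L Y' := by
  have hdeg : n * (f - 1) < n * f - (n - 1) := by
    obtain ⟨f, rfl⟩ := Nat.exists_eq_add_of_le' hf
    rw [Nat.add_sub_cancel, Nat.mul_succ]
    omega
  have hmem_encard (y : List Bool) : {Y ∈ 𝒴 | y ∈ Y}.encard ≤ f := by
    rw [← (hmemfin y).cast_ncard_eq]; exact_mod_cast hmem y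
  obtain ⟨L⟩ := (Multiset.sharingGraph 𝒴).colorable_of_encard_neighborSet_lt fun Y ↦ by
    by_cases hY : Y ∈ 𝒴
    · refine (Multiset.encard_neighborSet_sharingGraph_le hmem_encard hY).trans_lt ?_
      rw [hcard Y hY]; exact_mod_cast hdeg
    · rw [Multiset.neighborSet_sharingGraph_eq_empty hY, Set.encard_empty]
      exact_mod_cast (Nat.zero_le _).trans_lt hdeg
  exact ⟨L, fun Y hY Y' hY' hne hshare ↦
    L.valid (Multiset.sharingGraph_adj.mpr ⟨hY, hY', hne, hshare⟩)⟩

theorem labeling_exists (n f : ℕ) (hn : 2 ≤ n) (hf : 1 ≤ f)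
    (𝒴 : Set (Multiset (List Bool))) (hcount : 𝒴.Countable)
    (hcard : ∀ Y ∈ 𝒴, Multiset.card Y = n)
    (hmemfin : ∀ y : List Bool, {Y ∈ 𝒴 | y ∈ Y}.Finite)
    (hmem : ∀ y : List Bool, {Y ∈ 𝒴 | y ∈ Y}.ncard ≤ f) :
    ∃ L : Multiset (List Bool) → Fin (n * f - (n - 1)),
      ∀ Y ∈ 𝒴, ∀ Y' ∈ 𝒴, Y ≠ Y' → (∃ s : List Bool, s ∈ Y ∧ s ∈ Y') →
        L Y ≠ L Y' :=
  labeling_exists_general n f hn hf 𝒴 hcard hmemfin hmem
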